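/- arXiv:2108.02581 — 5 statements merged into one kernel-verified Lean document; each statement's English description precedes it below -/
import Mathlib

section
/- The limit T-mapping μ* of the saturation sequence satisfies Δ: for every tuple t in D, μ*(t) ≠ ∅, and μ* satisfies every functional dependency in FD. -/
open Set

namespace IncPaper

variable {Attr Const : Type}

/-- A tuple over the universe `Attr` with constants `Const`: a partial assignment. -/
abbrev Tup (Attr Const : Type) := Attr → Option Const

/-- Well-formedness: each attribute is assigned a constant of its own domain. -/
def WF (dom : Const → Attr) (t : Tup Attr Const) : Prop :=
  ∀ a c, t a = some c → dom c = a

/-- The schema of a tuple: the attributes on which it is defined. -/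
def sch (t : Tup Attr Const) : Set Attr := {a | t a ≠ none}

/-- Sub-tuple relation `t₁ ⊑ t₂`. -/
def Sub (t₁ t₂ : Tup Attr Const) : Prop := ∀ a c, t₁ a = some c → t₂ a = some c

/-- A T-mapping assigns a set of naturals to each constant. -/
abbrev TMap (Const : Type) := Const → Set ℕ

/-- Extension of a T-mapping to tuples: intersection over occurring constants. -/
def tmap (μ : TMap Const) (t : Tup Attr Const) : Set ℕ :=
  {n | ∀ a c, t a = some c → n ∈ μ c}

/-- A functional dependency `X → A`. -/
structure FDep (Attr : Type) where
  X : Set Attr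
  A : Attr

/-- Standing assumptions on sets of functional dependencies `X → A`:
`X` nonempty and `A ∉ X`. -/
def GoodFD (FD : Set (FDep Attr)) : Prop := ∀ fd ∈ FD, fd.X.Nonempty ∧ fd.A ∉ fd.X

/-- A T-mapping satisfies the dependency `X → Y`. -/
def SatFD (dom : Const → Attr) (μ : TMap Const) (X Y : Set Attr) : Prop :=
  ∀ x y : Tup Attr Const, WF dom x → WF dom y → sch x = X → sch y = Y →
    (tmap μ x ∩ tmap μ y).Nonempty → tmap μ x ⊆ tmap μ y

/-- A T-mapping satisfies a dependency `X → A` (single-attribute form). -/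
def SatFDA (dom : Const → Attr) (μ : TMap Const) (fd : FDep Attr) : Prop :=
  ∀ x : Tup Attr Const, WF dom x → sch x = fd.X →
    ∀ a : Const, dom a = fd.A → (tmap μ x ∩ μ a).Nonempty → tmap μ x ⊆ μ a

/-- `μ ⊨ Δ` where `Δ = (D, FD)`. -/
def SatDB (dom : Const → Attr) (μ : TMap Const)
    (D : Set (Tup Attr Const)) (FD : Set (FDep Attr)) : Prop :=
  (∀ t ∈ D, (tmap μ t).Nonempty) ∧ ∀ fd ∈ FD, SatFDA dom μ fd

/-- `Δ ⊢ t`: every T-mapping satisfying `Δ` assigns `t` a nonempty set. -/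
def Derives (dom : Const → Attr) (D : Set (Tup Attr Const)) (FD : Set (FDep Attr))
    (t : Tup Attr Const) : Prop :=
  ∀ μ : TMap Const, SatDB dom μ D FD → (tmap μ t).Nonempty

/-- `Δ |∼ t`: `t` is potentially false. -/
def PotFalse (dom : Const → Attr) (D : Set (Tup Attr Const)) (FD : Set (FDep Attr))
    (t : Tup Attr Const) : Prop :=
  ∃ a a' : Const, a ≠ a' ∧ dom a = dom a' ∧
    ∀ μ : TMap Const, SatDB dom μ D FD → tmap μ t ⊆ μ a ∩ μ a'

/-- The closure `t⁺` of a tuple. -/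
def closure (dom : Const → Attr) (D : Set (Tup Attr Const)) (FD : Set (FDep Attr))
    (t : Tup Attr Const) : Set Const :=
  {a | ∀ μ : TMap Const, SatDB dom μ D FD → tmap μ t ⊆ μ a}

/-- The initial T-mapping `μ₀`: identifiers of tuples of `D` containing the constant. -/
def initMap (ident : Tup Attr Const → ℕ) (D : Set (Tup Attr Const)) : TMap Const :=
  fun c => {n | ∃ t ∈ D, ident t = n ∧ ∃ a, t a = some c}

/-- One step of the saturation sequence enforcing a violated dependency. -/
def SatStep (dom : Const → Attr) (FD : Set (FDep Attr)) (μ μ' : TMap Const) : Prop :=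
  ∃ fd ∈ FD, ∃ x : Tup Attr Const, WF dom x ∧ sch x = fd.X ∧
    ∃ a : Const, dom a = fd.A ∧ (tmap μ x ∩ μ a).Nonempty ∧ ¬ tmap μ x ⊆ μ a ∧
      μ' a = μ a ∪ tmap μ x ∧ ∀ c, c ≠ a → μ' c = μ c

/-- An interpretation: a T-mapping satisfying the partition constraint. -/
def Interp (dom : Const → Attr) (μ : TMap Const) : Prop :=
  ∀ a a' : Const, a ≠ a' → dom a = dom a' → μ a ∩ μ a' = ∅

open Classical in
/-- The tuple `xa`: extend `x` with the constant `a` (on attribute `dom a`). -/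
noncomputable def extend (dom : Const → Attr) (x : Tup Attr Const) (a : Const) :
    Tup Attr Const :=
  fun b => if b = dom a then some a else x b

/-- The computed closure `cl(t)` of the closure algorithm (Algorithm 1). -/
inductive InCl (dom : Const → Attr) (D : Set (Tup Attr Const)) (FD : Set (FDep Attr))
    (t : Tup Attr Const) : Const → Prop
  | base (a : Const) (b : Attr) : t b = some a → InCl dom D FD t a
  | step (fd : FDep Attr) (x : Tup Attr Const) (a : Const) :
      fd ∈ FD → WF dom x → sch x = fd.X → dom a = fd.A →
      (∀ c : Const, (∃ b, x b = some c) → InCl dom D FD t c) →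
      Derives dom (insert t D) FD (extend dom x a) →
      InCl dom D FD t a

/-- Two tuples agree (and are defined) on a set of attributes. -/
def agreeOn (t₁ t₂ : Tup Attr Const) (X : Set Attr) : Prop :=
  ∀ b ∈ X, t₁ b = t₂ b ∧ t₁ b ≠ none

open Classical in
/-- The tuple obtained from `t₂` by taking `t₁`'s `A`-value. -/
noncomputable def chaseJoin (fd : FDep Attr) (t₁ t₂ : Tup Attr Const) : Tup Attr Const :=
  fun b => if b = fd.A then t₁ b else t₂ b

/-- One step of the chase procedure (Algorithm 2): add a new joined tuple. -/
def ChaseStep (FD : Set (FDep Attr)) (S S' : Set (Tup Attr Const)) : Prop :=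
  ∃ fd ∈ FD, ∃ t₁ ∈ S, ∃ t₂ ∈ S,
    fd.X ⊆ sch t₁ ∧ fd.A ∈ sch t₁ ∧ fd.X ⊆ sch t₂ ∧ agreeOn t₁ t₂ fd.X ∧
    chaseJoin fd t₁ t₂ ∉ S ∧ S' = insert (chaseJoin fd t₁ t₂) S

/-- Closure of a relation scheme `Q` with respect to `FD`. -/
inductive InSchCl (FD : Set (FDep Attr)) (Q : Set Attr) : Attr → Prop
  | base (A : Attr) : A ∈ Q → InSchCl FD Q A
  | step (fd : FDep Attr) : fd ∈ FD → (∀ B ∈ fd.X, InSchCl FD Q B) → InSchCl FD Q fd.A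

/-- Relational satisfaction of a functional dependency by a set of tuples. -/
def RelSatFD (R : Set (Tup Attr Const)) (fd : FDep Attr) : Prop :=
  ∀ t ∈ R, ∀ t' ∈ R, fd.X ⊆ sch t → fd.A ∈ sch t → fd.X ⊆ sch t' → fd.A ∈ sch t' →
    agreeOn t t' fd.X → t fd.A = t' fd.A

/-- A repair of `Δ`: a maximal subset of the chased table `D*` satisfying `FD`. -/
def IsRepair (FD : Set (FDep Attr)) (Dstar R : Set (Tup Attr Const)) : Prop :=
  R ⊆ Dstar ∧ (∀ fd ∈ FD, RelSatFD R fd) ∧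
    ∀ R', R ⊆ R' → R' ⊆ Dstar → (∀ fd ∈ FD, RelSatFD R' fd) → R' = R

open Classical in
/-- Restriction of a tuple to a schema `X`. -/
noncomputable def restrict (t : Tup Attr Const) (X : Set Attr) : Tup Attr Const :=
  fun b => if b ∈ X then t b else none

/-- Projection `π_X(D)` of a set of tuples. -/
def projD (Dst : Set (Tup Attr Const)) (X : Set Attr) : Set (Tup Attr Const) :=
  {q | ∃ t ∈ Dst, X ⊆ sch t ∧ q = restrict t X}

/-- Projection `π_X(FD)` of a set of functional dependencies. -/
def projFD (FD : Set (FDep Attr)) (X : Set Attr) : Set (FDep Attr) :=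
  {fd ∈ FD | fd.X ⊆ X ∧ fd.A ∈ X}

/-- Selection `σ_Γ(D)`. -/
def sel (Γ : Tup Attr Const → Prop) (Dst : Set (Tup Attr Const)) :
    Set (Tup Attr Const) :=
  {t ∈ Dst | Γ t}

/-- `inc(X → A)`: the `X`-values with conflicting `A`-values in `D*`. -/
def IncSet (Dstar : Set (Tup Attr Const)) (fd : FDep Attr) : Set (Tup Attr Const) :=
  {x | sch x = fd.X ∧ ∃ q ∈ Dstar, ∃ q' ∈ Dstar, Sub x q ∧ Sub x q' ∧
    ∃ a a' : Const, q fd.A = some a ∧ q' fd.A = some a' ∧ a ≠ a'}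

/-- The output of the repair-generation procedure for a choice function. -/
def genRepair (FD : Set (FDep Attr)) (Dstar : Set (Tup Attr Const))
    (choice : FDep Attr → Tup Attr Const → Const) : Set (Tup Attr Const) :=
  {q | q ∈ Dstar ∧ ∀ fd ∈ FD, ∀ x ∈ IncSet Dstar fd,
    Sub x q → fd.A ∈ sch q → q fd.A = some (choice fd x)}

/-- Belnap's four truth values. -/
inductive Four where
  | t
  | b
  | n
  | f
  deriving DecidableEq

namespace Four

/-- Knowledge ordering `≼ₖ`. -/
def kle (x y : Four) : Prop := x = y ∨ x = n ∨ y = b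

/-- Truth ordering `≼ₜ`. -/
def tle (x y : Four) : Prop := x = y ∨ x = f ∨ y = t

/-- Knowledge join `⊕`. -/
def oplus (x y : Four) : Four :=
  if x = n then y else if y = n then x else if x = y then x else b

/-- Knowledge meet `⊗`. -/
def otimes (x y : Four) : Four :=
  if x = b then y else if y = b then x else if x = y then x else n

/-- Truth join `∨`. -/
def lor (x y : Four) : Four :=
  if x = f then y else if y = f then x else if x = y then x else t

/-- Truth meet `∧`. -/
def land (x y : Four) : Four :=
  if x = t then y else if y = t then x else if x = y then x else f

end Four

/-- The four truth values of tuples. -/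
inductive TV where
  | vtrue
  | vfalse
  | vinc
  | vunkn
  deriving DecidableEq

namespace TV

/-- Knowledge ordering `◁` on truth values: `unkn ◁ true ◁ inc`, `unkn ◁ false ◁ inc`. -/
def kle (x y : TV) : Prop := x = y ∨ x = vunkn ∨ y = vinc

/-- Knowledge join `⊕` on truth values. -/
def kjoin (x y : TV) : TV :=
  if x = vunkn then y else if y = vunkn then x else if x = y then x else vinc

end TV

open Classical in
/-- The truth value `v_Δ(t)` of a tuple in `Δ = (D, FD)`. -/
noncomputable def tval (dom : Const → Attr) (D : Set (Tup Attr Const))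
    (FD : Set (FDep Attr)) (t : Tup Attr Const) : TV :=
  if Derives dom D FD t then (if PotFalse dom D FD t then .vinc else .vtrue)
  else (if PotFalse dom D FD t then .vfalse else .vunkn)

section Saturation

variable {dom : Const → Attr} {FD : Set (FDep Attr)}

theorem tmap_mono {μ ν : TMap Const} (h : μ ≤ ν) (t : Tup Attr Const) :
    tmap μ t ⊆ tmap ν t :=
  fun _ hn a c hac => h c (hn a c hac)

theorem ident_mem_tmap_initMap (ident : Tup Attr Const → ℕ) {D : Set (Tup Attr Const)}
    {t : Tup Attr Const} (ht : t ∈ D) : ident t ∈ tmap (initMap ident D) t :=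
  fun a _ hac => ⟨t, ht, rfl, a, hac⟩

theorem SatStep.le {μ μ' : TMap Const} (h : SatStep dom FD μ μ') : μ ≤ μ' := by
  obtain ⟨-, -, x, -, -, a, -, -, -, ha, hother⟩ := h
  intro c
  by_cases hc : c = a
  · subst hc
    rw [ha]
    exact subset_union_left
  · rw [hother c hc]

theorem SatStep.ne {μ μ' : TMap Const} (h : SatStep dom FD μ μ') : μ' ≠ μ := by
  rintro rfl
  obtain ⟨-, -, x, -, -, a, -, -, hnsub, ha, -⟩ := h
  exact hnsub (ha ▸ subset_union_right)

theorem exists_satStep_of_not_satFDA {μ : TMap Const} {fd : FDep Attr} (hfd : fd ∈ FD)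
    (h : ¬ SatFDA dom μ fd) : ∃ μ', SatStep dom FD μ μ' := by
  classical
  simp only [SatFDA, not_forall, exists_prop] at h
  obtain ⟨x, hwf, hsch, a, hdom, hne, hnsub⟩ := h
  refine ⟨Function.update μ a (μ a ∪ tmap μ x), fd, hfd, x, hwf, hsch, a, hdom, hne, hnsub,
    Function.update_self .., fun c hc => Function.update_of_ne hc ..⟩

theorem satFDA_of_forall_not_satStep {μ : TMap Const} (h : ∀ μ', ¬ SatStep dom FD μ μ') :
    ∀ fd ∈ FD, SatFDA dom μ fd := fun _ hfd => by
  by_contra hsat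
  obtain ⟨μ', hstep⟩ := exists_satStep_of_not_satFDA hfd hsat
  exact h μ' hstep

end Saturation

theorem limit_satisfies_db_general (dom : Const → Attr)
    (D : Set (Tup Attr Const))
    (ident : Tup Attr Const → ℕ)
    (FD : Set (FDep Attr))
    (μs : ℕ → TMap Const) (h0 : μs 0 = initMap ident D)
    (hfair : ∀ i, SatStep dom FD (μs i) (μs (i + 1)) ∨
      (μs (i + 1) = μs i ∧ ∀ ν : TMap Const, ¬ SatStep dom FD (μs i) ν))
    (N : ℕ) (hN : ∀ i, N ≤ i → μs i = μs N) :
    SatDB dom (μs N) D FD := by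
  have hmono : Monotone μs := monotone_nat_of_le_succ fun i =>
    (hfair i).elim SatStep.le fun h => h.1.ge
  have hsaturated : ∀ ν, ¬ SatStep dom FD (μs N) ν :=
    (hfair N).elim (fun h => absurd (hN (N + 1) N.le_succ) h.ne) And.right
  refine ⟨fun t ht => ⟨ident t, ?_⟩, satFDA_of_forall_not_satStep hsaturated⟩
  exact tmap_mono (h0 ▸ hmono N.zero_le) t (ident_mem_tmap_initMap ident ht)

/-- the limit `μ*` of the saturation sequence satisfies `Δ`:
`μ*(t) ≠ ∅` for every `t ∈ D`, and `μ*` satisfies every dependency of `FD`. -/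
theorem limit_satisfies_db [Fintype Attr] (dom : Const → Attr)
    (D : Set (Tup Attr Const)) (hDfin : D.Finite) (hDwf : ∀ t ∈ D, WF dom t)
    (ident : Tup Attr Const → ℕ)
    (hid : ∀ t₁ ∈ D, ∀ t₂ ∈ D, ident t₁ = ident t₂ → t₁ = t₂)
    (FD : Set (FDep Attr)) (hFD : GoodFD FD)
    (μs : ℕ → TMap Const) (h0 : μs 0 = initMap ident D)
    (hfair : ∀ i, SatStep dom FD (μs i) (μs (i + 1)) ∨
      (μs (i + 1) = μs i ∧ ∀ ν : TMap Const, ¬ SatStep dom FD (μs i) ν))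
    (N : ℕ) (hN : ∀ i, N ≤ i → μs i = μs N) :
    SatDB dom (μs N) D FD :=
  limit_satisfies_db_general dom D ident FD μs h0 hfair N hN

end IncPaper
end

section
/- The closure algorithm is sound: if a constant a is placed in the computed closure cl(t) of tuple t (starting from the constants of t and repeatedly adding a whenever some X → A ∈ FD has a tuple x over X with all constants of x already in cl(t) and Δ_t ⊢ xa), then for every T-mapping μ satisfying Δ, μ(t) ⊆ μ(a). -/
open Set

namespace IncPaper

variable {Attr Const : Type}

theorem apply_dom_eq_none_of_sch_eq {dom : Const → Attr} {fd : FDep Attr} {x : Tup Attr Const}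
    {a : Const} (hA : fd.A ∉ fd.X) (hsx : sch x = fd.X) (hda : dom a = fd.A) :
    x (dom a) = none := by
  by_contra h
  exact hA (hsx ▸ hda ▸ h)

theorem tmap_extend {dom : Const → Attr} (μ : TMap Const) {x : Tup Attr Const} {a : Const}
    (hx : x (dom a) = none) : tmap μ (extend dom x a) = tmap μ x ∩ μ a := by
  ext n
  constructor
  · intro hn
    refine ⟨fun b c hbc => hn b c ?_, hn (dom a) a (by simp [extend])⟩
    have hb : b ≠ dom a := by rintro rfl; simp [hx] at hbc
    simp [extend, hb, hbc]
  · rintro ⟨hnx, hna⟩ b c hbc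
    by_cases hb : b = dom a
    · subst hb
      simp only [extend, if_true, Option.some.injEq] at hbc
      exact hbc ▸ hna
    · simp only [extend, hb, if_false] at hbc
      exact hnx b c hbc

theorem subset_tmap {μ : TMap Const} {s : Set ℕ} {x : Tup Attr Const}
    (h : ∀ b c, x b = some c → s ⊆ μ c) : s ⊆ tmap μ x :=
  fun _ hn b c hbc => h b c hbc hn

theorem SatDB.insert {dom : Const → Attr} {μ : TMap Const} {D : Set (Tup Attr Const)}
    {FD : Set (FDep Attr)} {t : Tup Attr Const} (hμ : SatDB dom μ D FD)
    (ht : (tmap μ t).Nonempty) : SatDB dom μ (insert t D) FD := by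
  refine ⟨?_, hμ.2⟩
  rintro u (rfl | hu)
  exacts [ht, hμ.1 u hu]

/-- The step rule of the closure algorithm is sound: a model of `Δ` in which `t` is
nonempty is a model of `Δ_t`, so `xa` is nonempty there and the dependency `X → A`
forces `μ(x) ⊆ μ(a)`. -/
theorem tmap_subset_of_derives_extend {dom : Const → Attr} {μ : TMap Const}
    {D : Set (Tup Attr Const)} {FD : Set (FDep Attr)} {t x : Tup Attr Const} {a : Const}
    {fd : FDep Attr} (hμ : SatDB dom μ D FD) (ht : (tmap μ t).Nonempty) (hfd : fd ∈ FD)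
    (hA : fd.A ∉ fd.X) (hwx : WF dom x) (hsx : sch x = fd.X) (hda : dom a = fd.A)
    (hder : Derives dom (insert t D) FD (extend dom x a)) : tmap μ x ⊆ μ a := by
  have hxa := hder μ (hμ.insert ht)
  rw [tmap_extend μ (apply_dom_eq_none_of_sch_eq hA hsx hda)] at hxa
  exact hμ.2 fd hfd x hwx hsx a hda hxa

theorem InCl.mem_closure {dom : Const → Attr} {D : Set (Tup Attr Const)}
    {FD : Set (FDep Attr)} {t : Tup Attr Const} {a : Const} (hFD : GoodFD FD)
    (h : InCl dom D FD t a) : a ∈ closure dom D FD t := by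
  induction h with
  | base a b hb => exact fun μ _ n hn => hn b a hb
  | step fd x a hfd hwx hsx hda _ hder ih =>
    intro μ hμ n hn
    have htx : tmap μ t ⊆ tmap μ x := subset_tmap fun b c hbc => ih c ⟨b, hbc⟩ μ hμ
    exact tmap_subset_of_derives_extend hμ ⟨n, hn⟩ hfd (hFD fd hfd).2 hwx hsx hda hder
      (htx hn)

theorem closure_algorithm_sound_general (dom : Const → Attr)
    (D : Set (Tup Attr Const))
    (FD : Set (FDep Attr)) (hFD : GoodFD FD)
    (t : Tup Attr Const) :
    ∀ a : Const, InCl dom D FD t a →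
      ∀ μ : TMap Const, SatDB dom μ D FD → tmap μ t ⊆ μ a :=
  fun _ h => h.mem_closure hFD

/-- soundness of the closure algorithm: every constant `a` placed in the
computed closure `cl(t)` satisfies `μ(t) ⊆ μ(a)` for every T-mapping `μ ⊨ Δ`. -/
theorem closure_algorithm_sound (dom : Const → Attr)
    (D : Set (Tup Attr Const)) (hDwf : ∀ u ∈ D, WF dom u)
    (FD : Set (FDep Attr)) (hFD : GoodFD FD)
    (t : Tup Attr Const) (hwt : WF dom t) :
    ∀ a : Const, InCl dom D FD t a →
      ∀ μ : TMap Const, SatDB dom μ D FD → tmap μ t ⊆ μ a :=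
  closure_algorithm_sound_general dom D FD hFD t

end IncPaper
end

section
/- Δ = (D, FD) is consistent (i.e., there exists an interpretation μ — a T-mapping with μ(a) ∩ μ(a') = ∅ for all distinct a, a' in the same attribute domain — satisfying Δ) if and only if there is no tuple t with truth value inc, i.e., no tuple t such that both Δ ⊢ t and Δ |∼ t. -/
open Set

namespace IncPaper

variable {Attr Const : Type}

/-!
An interpretation makes `μ a ∩ μ a'` empty, so it refutes every tuple that is both derivable
and potentially false. Conversely, number the tuples of `D` and let `μ* c` collect the numbers
of the tuples whose closure contains `c`. Closures are closed under the dependencies, which makes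
`μ*` a model of `Δ`; and if the number of `u` lies in `μ* a ∩ μ* a'`, then `u` itself is a
derivable tuple with `Δ |∼ u`.
-/

section Consistency

variable {dom : Const → Attr} {D : Set (Tup Attr Const)} {FD : Set (FDep Attr)}

theorem not_derives_and_potFalse_of_interp {μ : TMap Const} (hI : Interp dom μ)
    (hμ : SatDB dom μ D FD) (t : Tup Attr Const) :
    ¬ (Derives dom D FD t ∧ PotFalse dom D FD t) := by
  rintro ⟨hder, a, a', hne, hdom, hsub⟩
  obtain ⟨n, hn⟩ := hder μ hμ
  simpa [hI a a' hne hdom] using hsub μ hμ hn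

theorem derives_of_mem {u : Tup Attr Const} (hu : u ∈ D) : Derives dom D FD u :=
  fun _ hμ => hμ.1 u hu

theorem mem_closure_self {u : Tup Attr Const} {b : Attr} {c : Const} (h : u b = some c) :
    c ∈ closure dom D FD u :=
  fun _ _ _ hn => hn b c h

theorem tmap_subset_tmap_of_forall_mem_closure {x w : Tup Attr Const}
    (hxw : ∀ b c, x b = some c → c ∈ closure dom D FD w) {μ : TMap Const}
    (hμ : SatDB dom μ D FD) : tmap μ w ⊆ tmap μ x :=
  fun _ hn b c hbc => hxw b c hbc μ hμ hn

theorem mem_closure_of_derives_inter {fd : FDep Attr} (hfd : fd ∈ FD) {x : Tup Attr Const}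
    (hxwf : WF dom x) (hxsch : sch x = fd.X) {a : Const} (hda : dom a = fd.A)
    (hxa : ∀ μ, SatDB dom μ D FD → (tmap μ x ∩ μ a).Nonempty) {w : Tup Attr Const}
    (hxw : ∀ b c, x b = some c → c ∈ closure dom D FD w) :
    a ∈ closure dom D FD w := fun μ hμ =>
  (tmap_subset_tmap_of_forall_mem_closure hxw hμ).trans
    (hμ.2 fd hfd x hxwf hxsch a hda (hxa μ hμ))

variable (dom D FD) in
/-- The limit T-mapping `μ*` of the paper, read off from the closures. -/
def closureMap (ident : D → ℕ) : TMap Const :=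
  fun c => {n | ∃ u : D, ident u = n ∧ c ∈ closure dom D FD u}

theorem exists_forall_mem_closure_of_mem_tmap {ident : D → ℕ} (hident : ident.Injective)
    {x : Tup Attr Const} (hx : (sch x).Nonempty) {n : ℕ}
    (hn : n ∈ tmap (closureMap dom D FD ident) x) :
    ∃ u : D, ident u = n ∧ ∀ b c, x b = some c → c ∈ closure dom D FD u := by
  obtain ⟨b₀, hb₀⟩ := hx
  obtain ⟨c₀, hc₀⟩ := Option.ne_none_iff_exists'.mp hb₀
  obtain ⟨u, rfl, -⟩ := hn b₀ c₀ hc₀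
  refine ⟨u, rfl, fun b c hbc => ?_⟩
  obtain ⟨u', hu', hcu'⟩ := hn b c hbc
  rwa [hident hu'] at hcu'

theorem satDB_closureMap (hFD : GoodFD FD) {ident : D → ℕ} (hident : ident.Injective) :
    SatDB dom (closureMap dom D FD ident) D FD := by
  constructor
  · exact fun t ht =>
      ⟨ident ⟨t, ht⟩, fun b c hbc => ⟨⟨t, ht⟩, rfl, mem_closure_self hbc⟩⟩
  · rintro fd hfd x hxwf hxsch a hda ⟨n, hnx, u, rfl, hau⟩
    have hx : (sch x).Nonempty := hxsch ▸ (hFD fd hfd).1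
    obtain ⟨u', hu', hxu⟩ := exists_forall_mem_closure_of_mem_tmap hident hx hnx
    obtain rfl := (hident hu').symm
    have hxa : ∀ μ, SatDB dom μ D FD → (tmap μ x ∩ μ a).Nonempty := fun μ hμ =>
      (hμ.1 u u.2).mono fun _ hk =>
        ⟨tmap_subset_tmap_of_forall_mem_closure hxu hμ hk, hau μ hμ hk⟩
    intro m hmx
    obtain ⟨w, rfl, hxw⟩ := exists_forall_mem_closure_of_mem_tmap hident hx hmx
    exact ⟨w, rfl, mem_closure_of_derives_inter hfd hxwf hxsch hda hxa hxw⟩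

theorem interp_closureMap (hDwf : ∀ u ∈ D, WF dom u) {ident : D → ℕ}
    (hident : ident.Injective)
    (hno : ¬ ∃ t, WF dom t ∧ Derives dom D FD t ∧ PotFalse dom D FD t) :
    Interp dom (closureMap dom D FD ident) := by
  intro a a' hne hdom
  refine Set.eq_empty_of_forall_notMem fun n ⟨⟨u, hu, hau⟩, ⟨u', hu', hau'⟩⟩ => ?_
  obtain rfl := hident (hu.trans hu'.symm)
  exact hno ⟨u, hDwf u u.2, derives_of_mem u.2,
    a, a', hne, hdom, fun μ hμ _ hk => ⟨hau μ hμ hk, hau' μ hμ hk⟩⟩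

end Consistency

theorem consistent_iff_no_inconsistent_tuple_general (dom : Const → Attr)
    (D : Set (Tup Attr Const)) (hDfin : D.Finite) (hDwf : ∀ u ∈ D, WF dom u)
    (FD : Set (FDep Attr)) (hFD : GoodFD FD) :
    (∃ μ : TMap Const, Interp dom μ ∧ SatDB dom μ D FD) ↔
      ¬ ∃ t : Tup Attr Const, WF dom t ∧ Derives dom D FD t ∧ PotFalse dom D FD t := by
  constructor
  · rintro ⟨μ, hI, hμ⟩ ⟨t, -, ht⟩
    exact not_derives_and_potFalse_of_interp hI hμ t ht
  · intro hno
    have : Countable D := hDfin.countable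
    obtain ⟨ident, hident⟩ := exists_injective_nat D
    exact ⟨closureMap dom D FD ident, interp_closureMap hDwf hident hno,
      satDB_closureMap hFD hident⟩

/-- `Δ` is consistent (some interpretation satisfies it) iff no tuple has
truth value `inc`, i.e. there is no tuple `t` with both `Δ ⊢ t` and `Δ |∼ t`. -/
theorem consistent_iff_no_inconsistent_tuple [Fintype Attr] (dom : Const → Attr)
    (D : Set (Tup Attr Const)) (hDfin : D.Finite) (hDwf : ∀ u ∈ D, WF dom u)
    (FD : Set (FDep Attr)) (hFD : GoodFD FD) :
    (∃ μ : TMap Const, Interp dom μ ∧ SatDB dom μ D FD) ↔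
      ¬ ∃ t : Tup Attr Const, WF dom t ∧ Derives dom D FD t ∧ PotFalse dom D FD t :=
  consistent_iff_no_inconsistent_tuple_general dom D hDfin hDwf FD hFD

end IncPaper
end

section
/- A tuple t is false in Δ (i.e., Δ ⊬ t and Δ |∼ t) if and only if Δ ⊬ t and t is inconsistent in Δ_t = (D ∪ {t}, FD) (i.e., Δ_t ⊢ t and Δ_t |∼ t). -/
open Set

namespace IncPaper

variable {Attr Const : Type}

/-! The constraints of `Δ_t` are those of `Δ` together with `μ(t) ≠ ∅`, so `Δ_t ⊢ t` always
holds. A T-mapping of `Δ` with `μ(t) = ∅` satisfies every inclusion `μ(t) ⊆ S` vacuously, hence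
`Δ` and `Δ_t` force the same upper bounds on `μ(t)`; in particular `Δ_t |∼ t ↔ Δ |∼ t`. -/

section Extension

variable {dom : Const → Attr} {D : Set (Tup Attr Const)} {FD : Set (FDep Attr)}
  {t : Tup Attr Const} {μ : TMap Const}

theorem satDB_insert_iff :
    SatDB dom μ (insert t D) FD ↔ (tmap μ t).Nonempty ∧ SatDB dom μ D FD := by
  simp only [SatDB, Set.forall_mem_insert, and_assoc]

theorem derives_insert_self : Derives dom (insert t D) FD t :=
  fun _ hμ => (satDB_insert_iff.mp hμ).1

theorem forall_satDB_insert_tmap_subset_iff {S : TMap Const → Set ℕ} :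
    (∀ μ, SatDB dom μ (insert t D) FD → tmap μ t ⊆ S μ) ↔
      ∀ μ, SatDB dom μ D FD → tmap μ t ⊆ S μ := by
  refine ⟨fun h μ hμ => ?_, fun h μ hμ => h μ (satDB_insert_iff.mp hμ).2⟩
  rcases (tmap μ t).eq_empty_or_nonempty with hempty | hne
  · exact hempty ▸ Set.empty_subset _
  · exact h μ (satDB_insert_iff.mpr ⟨hne, hμ⟩)

theorem potFalse_insert_self_iff : PotFalse dom (insert t D) FD t ↔ PotFalse dom D FD t := by
  simp only [PotFalse, forall_satDB_insert_tmap_subset_iff]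

end Extension

theorem false_iff_inconsistent_in_extension_general (dom : Const → Attr)
    (D : Set (Tup Attr Const))
    (FD : Set (FDep Attr)) (t : Tup Attr Const) :
    (¬ Derives dom D FD t ∧ PotFalse dom D FD t) ↔
      (¬ Derives dom D FD t ∧ Derives dom (insert t D) FD t ∧
        PotFalse dom (insert t D) FD t) := by
  simp only [derives_insert_self, potFalse_insert_self_iff, true_and]

/-- `t` is false in `Δ` (`Δ ⊬ t` and `Δ |∼ t`) iff `Δ ⊬ t` and `t` is
inconsistent in `Δ_t = (D ∪ {t}, FD)` (`Δ_t ⊢ t` and `Δ_t |∼ t`). -/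
theorem false_iff_inconsistent_in_extension (dom : Const → Attr)
    (D : Set (Tup Attr Const)) (hDwf : ∀ u ∈ D, WF dom u)
    (FD : Set (FDep Attr)) (t : Tup Attr Const) (hwt : WF dom t) :
    (¬ Derives dom D FD t ∧ PotFalse dom D FD t) ↔
      (¬ Derives dom D FD t ∧ Derives dom (insert t D) FD t ∧
        PotFalse dom (insert t D) FD t) :=
  false_iff_inconsistent_in_extension_general dom D FD t

end IncPaper
end

section
/- Monotonicity of truth values under table merging: let Δᵢ = (Dᵢ, FDᵢ), i = 1,…,n, be databases over the same universe and Δ = (⋃Dᵢ, ⋃FDᵢ) their merge. Then for every tuple t, the knowledge-join ⊕ᵢ v_{Δᵢ}(t) of the truth values of t in the sources is ≤ (in the knowledge ordering unkn ◁ false ◁ inc, unkn ◁ true ◁ inc) the truth value v_Δ(t) of t in the merged database. -/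
open Set

namespace IncPaper

variable {Attr Const : Type}

/-! Enlarging a database `(D, FD)` only shrinks its set of models `μ ⊨ Δ`, and both `Δ ⊢ t` and
`Δ |∼ t` are universal statements over the models, so they persist; hence `v_Δ(t)` grows in the
knowledge ordering. Each source embeds into the merge, and `⊕` is a least upper bound. -/

section Monotone

variable {dom : Const → Attr} {D D' : Set (Tup Attr Const)} {FD FD' : Set (FDep Attr)}

theorem SatDB.mono {μ : TMap Const} (h : SatDB dom μ D' FD') (hD : D ⊆ D') (hFD : FD ⊆ FD') :
    SatDB dom μ D FD :=
  ⟨fun t ht => h.1 t (hD ht), fun fd hfd => h.2 fd (hFD hfd)⟩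

theorem Derives.mono {t : Tup Attr Const} (h : Derives dom D FD t) (hD : D ⊆ D')
    (hFD : FD ⊆ FD') : Derives dom D' FD' t :=
  fun μ hμ => h μ (hμ.mono hD hFD)

theorem PotFalse.mono {t : Tup Attr Const} (h : PotFalse dom D FD t) (hD : D ⊆ D')
    (hFD : FD ⊆ FD') : PotFalse dom D' FD' t :=
  let ⟨a, a', hne, hdom, hsub⟩ := h
  ⟨a, a', hne, hdom, fun μ hμ => hsub μ (hμ.mono hD hFD)⟩

theorem tval_mono (hD : D ⊆ D') (hFD : FD ⊆ FD') (t : Tup Attr Const) :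
    TV.kle (tval dom D FD t) (tval dom D' FD' t) := by
  have hder := fun h : Derives dom D FD t => h.mono hD hFD
  have hpot := fun h : PotFalse dom D FD t => h.mono hD hFD
  unfold tval
  split_ifs <;> simp_all [TV.kle]

end Monotone

namespace TV

theorem kjoin_kle {x y z : TV} (hx : x.kle z) (hy : y.kle z) : (x.kjoin y).kle z := by
  cases x <;> cases y <;> cases z <;> simp_all [kle, kjoin]

theorem foldr_kjoin_kle {z : TV} {l : List TV} (h : ∀ x ∈ l, x.kle z) :
    (l.foldr kjoin vunkn).kle z := by
  induction l with
  | nil => exact Or.inr (Or.inl rfl)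
  | cons x l ih =>
    rw [List.forall_mem_cons] at h
    exact kjoin_kle h.1 (ih h.2)

end TV

/-- monotonicity of truth values under merging: the knowledge-join of the
truth values of `t` in the sources is below (in the knowledge ordering) the truth value
of `t` in the merged database `Δ = (⋃ Dᵢ, ⋃ FDᵢ)`. -/
theorem merge_monotone (dom : Const → Attr) (n : ℕ)
    (Ds : Fin n → Set (Tup Attr Const)) (FDs : Fin n → Set (FDep Attr))
    (t : Tup Attr Const) :
    TV.kle ((List.ofFn fun i => tval dom (Ds i) (FDs i) t).foldr TV.kjoin TV.vunkn)
      (tval dom (⋃ i, Ds i) (⋃ i, FDs i) t) := by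
  refine TV.foldr_kjoin_kle fun x hx => ?_
  obtain ⟨i, rfl⟩ := List.mem_ofFn.mp hx
  exact tval_mono (subset_iUnion Ds i) (subset_iUnion FDs i) t

end IncPaper
end
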